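/- Let U = ∂_{ρ₁,e₁} and V = ∂_{ρ₂,e₂} be homogeneous derivations with c₂ = ⟨ρ₂,e₁⟩ ≥ 1 and d₁ = ⟨ρ₁,e₂⟩. Then for all 0 ≤ m ≤ d₁, ad_U^m(V) = ∂_{r_m, f_m} where r_m = (d₁!/(d₁−m)!) ρ₂ − m c₂ (d₁!/(d₁−m+1)!) ρ₁ and f_m = e₂ + m e₁. -/

import Mathlib

/-! Both sides of the final identity are homogeneous derivations, so everything reduces to the
commutator formula `[∂_{ρ,e}, ∂_{ρ',e'}] = ∂_{⟨ρ,e'⟩ρ' − ⟨ρ',e⟩ρ, e + e'}`. Iterating it with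
`ρ = ρ₁`, `e = e₁` turns `ad_U^m V` into `∂_{aₘ ρ₂ − bₘ ρ₁, e₂ + m e₁}`, where the coefficients
obey `aₘ₊₁ = (d − m) aₘ` and `bₘ₊₁ = (d − m + 1) bₘ + c₂ aₘ`; these are solved by
`aₘ = d(d−1)⋯(d−m+1)` and `bₘ = m c₂ aₘ₋₁`. -/

/-- The homogeneous derivation `∂_{ρ,e}` of the (semi)group algebra, defined on the
monomial basis by `∂_{ρ,e}(χ^m) = ⟨ρ,m⟩ χ^{m+e}`. -/
noncomputable def homDer (K : Type*) [Field K] {M : Type*} [AddCommGroup M]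
    (ρ : M →+ ℤ) (e : M) :
    AddMonoidAlgebra K M →ₗ[K] AddMonoidAlgebra K M :=
  (Finsupp.lsum K fun m =>
    LinearMap.toSpanSingleton K (AddMonoidAlgebra K M)
      ((ρ m : ℤ) • AddMonoidAlgebra.single (m + e) (1 : K))) ∘ₗ
    (AddMonoidAlgebra.coeffLinearEquiv K).toLinearMap

theorem Nat.cast_descFactorial_succ {R : Type*} [Ring R] (n k : ℕ) :
    (n.descFactorial (k + 1) : R) = (n - k : R) * n.descFactorial k := by
  rw [← descPochhammer_eval_eq_descFactorial, ← descPochhammer_eval_eq_descFactorial,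
    descPochhammer_succ_eval, descPochhammer_eval_eq_descFactorial]
  exact (Nat.cast_commute _ _).eq

theorem Nat.cast_mul_descFactorial_pred {R : Type*} [CommRing R] (n k : ℕ) :
    (k * (n - k + 1) * n.descFactorial (k - 1) : R) = k * n.descFactorial k := by
  cases k with
  | zero => simp
  | succ k =>
    rw [Nat.cast_descFactorial_succ, Nat.add_sub_cancel]
    push_cast
    ring

section

variable {K : Type*} [Field K] {M : Type*} [AddCommGroup M]

open AddMonoidAlgebra

@[simp]
theorem homDer_single (ρ : M →+ ℤ) (e n : M) (c : K) :
    homDer K ρ e (single n c) = ρ n • single (n + e) c := by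
  simp [homDer, AddMonoidAlgebra.coeffLinearEquiv, LinearMap.toSpanSingleton_apply, mul_comm]

theorem homDer_comp_sub_comp (ρ ρ' : M →+ ℤ) (e e' : M) :
    homDer K ρ e ∘ₗ homDer K ρ' e' - homDer K ρ' e' ∘ₗ homDer K ρ e
      = homDer K (ρ e' • ρ' - ρ' e • ρ) (e' + e) := by
  refine AddMonoidAlgebra.lhom_ext' fun n => LinearMap.ext fun c => ?_
  simp only [LinearMap.comp_apply, AddMonoidAlgebra.lsingle_apply, LinearMap.sub_apply,
    homDer_single, map_zsmul, smul_smul, add_assoc, AddMonoidHom.sub_apply,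
    AddMonoidHom.smul_apply, smul_eq_mul, map_add, add_comm e' e, ← sub_smul]
  ring_nf

theorem iterate_ad_homDer (ρ₁ ρ₂ : M →+ ℤ) (e₁ e₂ : M) (h₁ : ρ₁ e₁ = -1)
    (d : ℕ) (hd : ρ₁ e₂ = d) (m : ℕ) :
    (fun W => homDer K ρ₁ e₁ ∘ₗ W - W ∘ₗ homDer K ρ₁ e₁)^[m] (homDer K ρ₂ e₂)
      = homDer K ((d.descFactorial m : ℤ) • ρ₂
          - ((m : ℤ) * ρ₂ e₁ * d.descFactorial (m - 1)) • ρ₁) (e₂ + m • e₁) := by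
  induction m with
  | zero => simp
  | succ m ih =>
    rw [Function.iterate_succ_apply', ih, homDer_comp_sub_comp, succ_nsmul, ← add_assoc]
    congr 1
    ext x
    simp only [AddMonoidHom.sub_apply, AddMonoidHom.smul_apply, map_add, map_nsmul, h₁, hd,
      smul_eq_mul, nsmul_eq_mul, Nat.add_sub_cancel, Nat.cast_descFactorial_succ, Nat.cast_succ]
    linear_combination -ρ₂ e₁ * ρ₁ x * Nat.cast_mul_descFactorial_pred (R := ℤ) d m

end

theorem stmt6_general {K : Type*} [Field K] {M : Type*} [AddCommGroup M]
    (ρ₁ ρ₂ : M →+ ℤ) (e₁ e₂ : M)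
    (h₁ : ρ₁ e₁ = -1)
    (d : ℕ) (hd : ρ₁ e₂ = (d : ℤ))
    (m : ℕ) (hm : m ≤ d) :
    (fun W => homDer K ρ₁ e₁ ∘ₗ W - W ∘ₗ homDer K ρ₁ e₁)^[m] (homDer K ρ₂ e₂)
      = homDer K
          (((d.factorial / (d - m).factorial : ℕ) : ℤ) • ρ₂
            - ((m : ℤ) * (ρ₂ e₁) * ((d.factorial / (d - m + 1).factorial : ℕ) : ℤ)) • ρ₁)
          (e₂ + m • e₁) := by
  rw [iterate_ad_homDer ρ₁ ρ₂ e₁ e₂ h₁ d hd, Nat.descFactorial_eq_div hm]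
  cases m with
  | zero => simp
  | succ m => rw [Nat.add_sub_cancel, Nat.descFactorial_eq_div (by omega), Nat.sub_add_eq,
      Nat.sub_add_cancel (by omega)]

/-- for `U = ∂_{ρ₁,e₁}`, `V = ∂_{ρ₂,e₂}` with `e₁, e₂` Demazure roots
(`⟨ρ₁,e₁⟩ = ⟨ρ₂,e₂⟩ = −1`), `c₂ = ⟨ρ₂,e₁⟩ ≥ 1` and `d₁ = ⟨ρ₁,e₂⟩ = d ≥ 0`, one has,
for all `0 ≤ m ≤ d₁`,
`ad_U^m(V) = ∂_{r_m, f_m}` with `r_m = (d₁!/(d₁−m)!) ρ₂ − m c₂ (d₁!/(d₁−m+1)!) ρ₁`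
and `f_m = e₂ + m e₁`. -/
theorem stmt6 {K : Type*} [Field K] [CharZero K] {M : Type*} [AddCommGroup M]
    (ρ₁ ρ₂ : M →+ ℤ) (e₁ e₂ : M)
    (h₁ : ρ₁ e₁ = -1) (h₂ : ρ₂ e₂ = -1)
    (hc : 1 ≤ ρ₂ e₁)
    (d : ℕ) (hd : ρ₁ e₂ = (d : ℤ))
    (m : ℕ) (hm : m ≤ d) :
    (fun W => homDer K ρ₁ e₁ ∘ₗ W - W ∘ₗ homDer K ρ₁ e₁)^[m] (homDer K ρ₂ e₂)
      = homDer K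
          (((d.factorial / (d - m).factorial : ℕ) : ℤ) • ρ₂
            - ((m : ℤ) * (ρ₂ e₁) * ((d.factorial / (d - m + 1).factorial : ℕ) : ℤ)) • ρ₁)
          (e₂ + m • e₁) :=
  stmt6_general ρ₁ ρ₂ e₁ e₂ h₁ d hd m hm
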